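/- arXiv:2603.20814 — 2 statements merged into one kernel-verified Lean document; each statement's English description precedes it below -/
import Mathlib

section
/- Let n > i ≥ 3, p > 1, and let f : V(T_{n,i}) → ℝ satisfy f(t_n) = 0, f(t_k) > 0 for all 1 ≤ k ≤ n-1, and R_{p,T_{n,i}}[f] = λ_{1,p}(T_{n,i}) (i.e., f is a positive first p-Dirichlet eigenfunction of T_{n,i}). Then f does not achieve its maximum over V(T_{n,i}) at any vertex t_j of the tail, i.e., f(t_j) < max_{v∈V(T_{n,i})} f(v) for all i ≤ j ≤ n. -/
open scoped Classical

noncomputable section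

/-- The term `|f x - f y| ^ p` as a function on unordered pairs. -/
noncomputable def edgeTerm {V : Type*} (p : ℝ) (f : V → ℝ) : Sym2 V → ℝ :=
  Sym2.lift ⟨fun x y => |f x - f y| ^ p, fun x y => by dsimp only; rw [abs_sub_comm]⟩

/-- The `p`-Rayleigh quotient of a function on a finite graph. -/
noncomputable def rayleigh {V : Type*} [Fintype V] [DecidableEq V] (G : SimpleGraph V)
    (p : ℝ) (f : V → ℝ) : ℝ :=
  (∑ e ∈ G.edgeFinset, edgeTerm p f e) / ∑ v, |f v| ^ p

/-- The first `p`-Dirichlet eigenvalue: infimum of the Rayleigh quotient over nonzero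
functions vanishing on the boundary (vertices of degree one). -/
noncomputable def lambda1 {V : Type*} [Fintype V] [DecidableEq V] (G : SimpleGraph V)
    (p : ℝ) : ℝ :=
  sInf {r | ∃ f : V → ℝ, f ≠ 0 ∧ (∀ v, G.degree v = 1 → f v = 0) ∧ r = rayleigh G p f}

/-- The tadpole graph `T_{n,i}` on vertices `0,…,n-1` (vertex `t_k` is `k-1`):
edges `t_k t_{k+1}` for `1 ≤ k ≤ n-1` together with the edge `t_1 t_i`. -/
def tadpole (n i : ℕ) : SimpleGraph (Fin n) :=
  SimpleGraph.fromRel (fun a b => a.val + 1 = b.val ∨ (a.val = 0 ∧ b.val = i - 1))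

/-- The path graph on `n` vertices `0,…,n-1`. -/
def pathG (n : ℕ) : SimpleGraph (Fin n) :=
  SimpleGraph.fromRel (fun a b : Fin n => a.val + 1 = b.val)

/-- The set of edges of `G` with exactly one endpoint in `U`. -/
noncomputable def crossEdges {V : Type*} [Fintype V] [DecidableEq V] (G : SimpleGraph V)
    (U : Finset V) : Finset (Sym2 V) :=
  G.edgeFinset.filter fun e =>
    Sym2.lift ⟨fun x y => (x ∈ U ∧ y ∉ U) ∨ (x ∉ U ∧ y ∈ U),
      fun x y => by simp only [eq_iff_iff]; tauto⟩ e

/-- The Dirichlet Cheeger constant: infimum of `|E(U,Uᶜ)|/|U|` over nonempty sets `U`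
of interior vertices (vertices of degree at least two). -/
noncomputable def dCheeger {V : Type*} [Fintype V] [DecidableEq V] (G : SimpleGraph V) : ℝ :=
  sInf {r | ∃ U : Finset V, U.Nonempty ∧ (∀ v ∈ U, 2 ≤ G.degree v) ∧
    r = ((crossEdges G U).card : ℝ) / U.card}

/-!
Write `φ_p(x) = |x|^(p-2) x`. A positive first eigenfunction `f` minimizes the Rayleigh
quotient, so differentiating `R[f + t g]` at `t = 0` gives the weak equation
`∑_{xy ∈ E} φ_p(f x - f y) (g x - g y) = λ ∑_v φ_p(f v) g v` for every `g` vanishing on the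
boundary. Take `g` the indicator of `{t_1, …, t_{m+1}}`: only the edges leaving this set
survive on the left, while the right side is positive. For `m ≥ i - 1` the only such edge is
`t_{m+1} t_{m+2}`, so `f` strictly decreases along the tail; for `m = i - 2` they are `t_1 t_i`
and `t_{i-1} t_i`, so a neighbour of `t_i` in the head carries a larger value than `t_i`.
-/

open Finset Topology

def phiP (p x : ℝ) : ℝ := |x| ^ (p - 2) * x

lemma phiP_neg (p x : ℝ) : phiP p (-x) = -phiP p x := by
  simp [phiP]

lemma phiP_nonneg {p x : ℝ} (hx : 0 ≤ x) : 0 ≤ phiP p x :=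
  mul_nonneg (by positivity) hx

lemma phiP_pos_iff {p x : ℝ} : 0 < phiP p x ↔ 0 < x := by
  rcases eq_or_ne x 0 with rfl | hx
  · simp [phiP]
  · exact mul_pos_iff_of_pos_left (by positivity)

lemma hasDerivAt_abs_add_mul_rpow {p : ℝ} (hp : 1 < p) (c b : ℝ) :
    HasDerivAt (fun t : ℝ => |c + t * b| ^ p) (p * phiP p c * b) 0 := by
  have hlin : HasDerivAt (fun t : ℝ => c + t * b) b 0 := by
    simpa using ((hasDerivAt_id (0 : ℝ)).mul_const b).const_add c
  have h := (hasDerivAt_abs_rpow (c + 0 * b) hp).comp (0 : ℝ) hlin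
  simpa [phiP, mul_assoc, Function.comp_def] using h

lemma edgeTerm_nonneg {V : Type*} {p : ℝ} (f : V → ℝ) (e : Sym2 V) :
    0 ≤ edgeTerm p f e := by
  induction e using Sym2.ind with
  | _ x y => exact Real.rpow_nonneg (abs_nonneg _) _

lemma sum_abs_rpow_pos {V : Type*} [Fintype V] {p : ℝ} {f : V → ℝ} (hf : f ≠ 0) :
    0 < ∑ v, |f v| ^ p := by
  obtain ⟨v, hv⟩ := Function.ne_iff.1 hf
  exact sum_pos' (fun _ _ => Real.rpow_nonneg (abs_nonneg _) _)
    ⟨v, mem_univ v, Real.rpow_pos_of_pos (abs_pos.2 hv) p⟩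

section Rayleigh

variable {V : Type*} [Fintype V] [DecidableEq V] {G : SimpleGraph V} {p : ℝ}

def edgePairing (p : ℝ) (f g : V → ℝ) : Sym2 V → ℝ :=
  Sym2.lift ⟨fun x y => phiP p (f x - f y) * (g x - g y), fun x y => by
    dsimp only
    rw [← neg_sub (f x), phiP_neg, ← neg_sub (g x)]
    ring⟩

lemma rayleigh_nonneg (f : V → ℝ) : 0 ≤ rayleigh G p f :=
  div_nonneg (sum_nonneg fun e _ => edgeTerm_nonneg f e)
    (sum_nonneg fun _ _ => Real.rpow_nonneg (abs_nonneg _) _)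

lemma lambda1_le_rayleigh {f : V → ℝ} (hf : f ≠ 0) (hfB : ∀ v, G.degree v = 1 → f v = 0) :
    lambda1 G p ≤ rayleigh G p f :=
  csInf_le ⟨0, by rintro r ⟨g, -, -, rfl⟩; exact rayleigh_nonneg g⟩ ⟨f, hf, hfB, rfl⟩

lemma hasDerivAt_rayleigh_add_smul (hp : 1 < p) {f : V → ℝ} (hf : f ≠ 0) (g : V → ℝ) :
    HasDerivAt (fun t : ℝ => rayleigh G p (f + t • g))
      ((p * (∑ e ∈ G.edgeFinset, edgePairing p f g e) * ∑ v, |f v| ^ p -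
        (∑ e ∈ G.edgeFinset, edgeTerm p f e) * (p * ∑ v, phiP p (f v) * g v)) /
        (∑ v, |f v| ^ p) ^ 2) 0 := by
  have hnum : HasDerivAt (fun t : ℝ => ∑ e ∈ G.edgeFinset, edgeTerm p (f + t • g) e)
      (p * ∑ e ∈ G.edgeFinset, edgePairing p f g e) 0 := by
    rw [mul_sum]
    refine HasDerivAt.fun_sum fun e _ => ?_
    induction e using Sym2.ind with
    | _ x y =>
      have hfun : (fun t : ℝ => edgeTerm p (f + t • g) s(x, y)) =
          fun t => |(f x - f y) + t * (g x - g y)| ^ p := by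
        funext t
        simp only [edgeTerm, Sym2.lift_mk, Pi.add_apply, Pi.smul_apply, smul_eq_mul]
        ring_nf
      rw [hfun, edgePairing, Sym2.lift_mk, ← mul_assoc]
      exact hasDerivAt_abs_add_mul_rpow hp (f x - f y) (g x - g y)
  have hden : HasDerivAt (fun t : ℝ => ∑ v, |(f + t • g) v| ^ p)
      (p * ∑ v, phiP p (f v) * g v) 0 := by
    rw [mul_sum]
    refine HasDerivAt.fun_sum fun v _ => ?_
    exact (hasDerivAt_abs_add_mul_rpow hp (f v) (g v)).congr_deriv (by ring)
  have h := hnum.div hden (by simpa using (sum_abs_rpow_pos hf).ne')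
  simp only [zero_smul, add_zero] at h
  exact h

lemma rayleigh_pos {f : V → ℝ} {x y : V} (hxy : G.Adj x y) (hf : f x ≠ f y) :
    0 < rayleigh G p f := by
  have hf0 : f ≠ 0 := fun h => hf (by simp [h])
  refine div_pos (sum_pos' (fun e _ => edgeTerm_nonneg f e) ⟨s(x, y), ?_, ?_⟩)
    (sum_abs_rpow_pos hf0)
  · exact (SimpleGraph.mem_edgeFinset).2 hxy
  · exact Real.rpow_pos_of_pos (abs_pos.2 (sub_ne_zero.2 hf)) p

theorem sum_edgePairing_eq_of_isLocalMin (hp : 1 < p) {f g : V → ℝ} (hf : f ≠ 0)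
    (hmin : IsLocalMin (fun t : ℝ => rayleigh G p (f + t • g)) 0) :
    ∑ e ∈ G.edgeFinset, edgePairing p f g e = rayleigh G p f * ∑ v, phiP p (f v) * g v := by
  have hD : ∑ v, |f v| ^ p ≠ 0 := (sum_abs_rpow_pos hf).ne'
  have h := hmin.hasDerivAt_eq_zero (hasDerivAt_rayleigh_add_smul hp hf g)
  rw [div_eq_zero_iff, or_iff_left (pow_ne_zero 2 hD)] at h
  rw [rayleigh, div_mul_eq_mul_div, eq_div_iff hD]
  have hp0 : p ≠ 0 := by linarith
  apply mul_left_cancel₀ hp0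
  linear_combination h

theorem isLocalMin_rayleigh_add_smul {f g : V → ℝ} (heig : rayleigh G p f = lambda1 G p)
    (hf : f ≠ 0) (hfB : ∀ v, G.degree v = 1 → f v = 0)
    (hgB : ∀ v, G.degree v = 1 → g v = 0) :
    IsLocalMin (fun t : ℝ => rayleigh G p (f + t • g)) 0 := by
  have hcont : Continuous fun t : ℝ => f + t • g := by fun_prop
  have hne : ∀ᶠ t in 𝓝 (0 : ℝ), f + t • g ≠ 0 := by
    refine (hcont.tendsto 0).eventually_ne ?_
    simpa using hf
  filter_upwards [hne] with t ht
  simp only [zero_smul, add_zero, heig]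
  exact lambda1_le_rayleigh ht fun v hv => by simp [hfB v hv, hgB v hv]

theorem sum_edgePairing_eq_lambda1_mul (hp : 1 < p) {f g : V → ℝ}
    (heig : rayleigh G p f = lambda1 G p) (hf : f ≠ 0) (hfB : ∀ v, G.degree v = 1 → f v = 0)
    (hgB : ∀ v, G.degree v = 1 → g v = 0) :
    ∑ e ∈ G.edgeFinset, edgePairing p f g e = lambda1 G p * ∑ v, phiP p (f v) * g v := by
  rw [← heig]
  exact sum_edgePairing_eq_of_isLocalMin hp hf (isLocalMin_rayleigh_add_smul heig hf hfB hgB)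

end Rayleigh

lemma SimpleGraph.two_le_degree_of_adj {V : Type*} {G : SimpleGraph V} {v u w : V}
    [Fintype (G.neighborSet v)] (hu : G.Adj v u) (hw : G.Adj v w) (huw : u ≠ w) :
    2 ≤ G.degree v := by
  rw [← G.card_neighborFinset_eq_degree]
  exact one_lt_card.2 ⟨u, by simpa using hu, w, by simpa using hw, huw⟩

section Tadpole

open Fin.NatCast

variable {n i : ℕ} [NeZero n]

lemma tadpole_edgeFinset (hi : 3 ≤ i) (hn : i < n) :
    (tadpole n i).edgeFinset = insert s(0, ((i - 1 : ℕ) : Fin n))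
      ((range (n - 1)).image fun k : ℕ => s((k : Fin n), ((k + 1 : ℕ) : Fin n))) := by
  ext e
  induction e using Sym2.ind with
  | _ a b =>
    rw [SimpleGraph.mem_edgeFinset, SimpleGraph.mem_edgeSet]
    simp only [tadpole, SimpleGraph.fromRel_adj, mem_insert, mem_image, mem_range, Sym2.eq_iff,
      ne_eq, Fin.ext_iff, Fin.val_zero]
    constructor
    · rintro ⟨hab, (h | ⟨ha, hb⟩) | (h | ⟨hb, ha⟩)⟩
      · refine Or.inr ⟨a, by omega, Or.inl ⟨by simp, ?_⟩⟩
        rw [Fin.val_cast_of_lt (by omega)]; omega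
      · exact Or.inl (Or.inl ⟨ha, by rw [Fin.val_cast_of_lt (by omega)]; omega⟩)
      · refine Or.inr ⟨b, by omega, Or.inr ⟨by simp, ?_⟩⟩
        rw [Fin.val_cast_of_lt (by omega)]; omega
      · exact Or.inl (Or.inr ⟨by rw [Fin.val_cast_of_lt (by omega)]; omega, hb⟩)
    · rintro ((⟨ha, hb⟩ | ⟨ha, hb⟩) | ⟨k, hk, ⟨ha, hb⟩ | ⟨ha, hb⟩⟩)
      · rw [Fin.val_cast_of_lt (by omega)] at hb; omega
      · rw [Fin.val_cast_of_lt (by omega)] at ha; omega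
      · rw [Fin.val_cast_of_lt (by omega)] at ha hb; omega
      · rw [Fin.val_cast_of_lt (by omega)] at ha hb; omega

lemma sum_tadpole_edgeFinset (hi : 3 ≤ i) (hn : i < n) (h : Sym2 (Fin n) → ℝ) :
    ∑ e ∈ (tadpole n i).edgeFinset, h e =
      h s(0, ((i - 1 : ℕ) : Fin n)) +
        ∑ k ∈ range (n - 1), h s((k : Fin n), ((k + 1 : ℕ) : Fin n)) := by
  rw [tadpole_edgeFinset hi hn, sum_insert, sum_image]
  · intro k hk l hl hkl
    simp only [coe_range, Set.mem_Iio] at hk hl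
    simp only [Sym2.eq_iff, Fin.ext_iff, Fin.val_cast_of_lt (show k < n by omega),
      Fin.val_cast_of_lt (show l < n by omega), Fin.val_cast_of_lt (show k + 1 < n by omega),
      Fin.val_cast_of_lt (show l + 1 < n by omega)] at hkl
    omega
  · simp only [mem_image, mem_range, not_exists, not_and]
    intro k hk hk0
    simp only [Sym2.eq_iff, Fin.ext_iff, Fin.val_zero, Fin.val_cast_of_lt (show k < n by omega),
      Fin.val_cast_of_lt (show k + 1 < n by omega),
      Fin.val_cast_of_lt (show i - 1 < n by omega)] at hk0
    omega

lemma tadpole_val_eq_of_degree_eq_one (hi : 3 ≤ i) (hn : i < n) {v : Fin n}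
    (hv : (tadpole n i).degree v = 1) : v.val = n - 1 := by
  by_contra hvn
  have hvlt := v.isLt
  suffices 2 ≤ (tadpole n i).degree v by omega
  have hadj : ∀ w : Fin n,
      (w.val + 1 = v.val ∨ v.val + 1 = w.val ∨ (v.val = 0 ∧ w.val = i - 1)) →
        (tadpole n i).Adj v w := by
    intro w hw
    refine (SimpleGraph.fromRel_adj _ v w).2 ⟨fun h => ?_, by omega⟩
    subst h
    omega
  rcases Nat.eq_zero_or_pos v.val with hv0 | hv0
  · refine SimpleGraph.two_le_degree_of_adj (u := ((1 : ℕ) : Fin n))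
      (w := ((i - 1 : ℕ) : Fin n)) (hadj _ ?_) (hadj _ ?_) ?_ <;>
    simp only [Fin.ext_iff, ne_eq, and_true, Fin.val_cast_of_lt (show 1 < n by omega),
      Fin.val_cast_of_lt (show i - 1 < n by omega)] <;> omega
  · refine SimpleGraph.two_le_degree_of_adj (u := ((v.val - 1 : ℕ) : Fin n))
      (w := ((v.val + 1 : ℕ) : Fin n)) (hadj _ ?_) (hadj _ ?_) ?_ <;>
    simp only [Fin.ext_iff, ne_eq, true_or, or_true,
      Fin.val_cast_of_lt (show v.val - 1 < n by omega),
      Fin.val_cast_of_lt (show v.val + 1 < n by omega)] <;> omega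

lemma sum_edgePairing_tadpole_indicator (hi : 3 ≤ i) (hn : i < n) (p : ℝ) (f : Fin n → ℝ)
    {m : ℕ} (hm : m + 1 < n) :
    ∑ e ∈ (tadpole n i).edgeFinset, edgePairing p f (fun v => if v.val ≤ m then 1 else 0) e =
      (if m < i - 1 then phiP p (f 0 - f ↑(i - 1)) else 0) + phiP p (f m - f ↑(m + 1)) := by
  rw [sum_tadpole_edgeFinset hi hn]
  congr 1
  · simp only [edgePairing, Sym2.lift_mk, Fin.val_zero,
      Fin.val_cast_of_lt (show i - 1 < n by omega)]
    rcases lt_or_ge m (i - 1) with h | h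
    · simp [h, Nat.not_le.2 h]
    · simp [h, not_lt.2 h]
  · rw [sum_eq_single m]
    · simp only [edgePairing, Sym2.lift_mk, Fin.val_cast_of_lt hm,
        Fin.val_cast_of_lt (show m < n by omega)]
      simp
    · intro k hk hkm
      simp only [mem_range] at hk
      simp only [edgePairing, Sym2.lift_mk, Fin.val_cast_of_lt (show k < n by omega),
        Fin.val_cast_of_lt (show k + 1 < n by omega)]
      split_ifs <;> first | omega | simp
    · intro h
      exact absurd (mem_range.2 (by omega)) h

variable {p : ℝ} {f : Fin n → ℝ}

theorem tadpole_flux_pos (hp : 1 < p) (hi : 3 ≤ i) (hn : i < n)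
    (hend : f ⟨n - 1, Nat.sub_one_lt (NeZero.ne n)⟩ = 0)
    (hpos : ∀ v : Fin n, v.val < n - 1 → 0 < f v)
    (heig : rayleigh (tadpole n i) p f = lambda1 (tadpole n i) p) {m : ℕ} (hm : m + 1 < n) :
    0 < (if m < i - 1 then phiP p (f 0 - f ↑(i - 1)) else 0) + phiP p (f m - f ↑(m + 1)) := by
  have h0 : (0 : Fin n).val < n - 1 := by simp only [Fin.val_zero]; omega
  have hf : f ≠ 0 := fun h => (hpos 0 h0).ne' (by simp [h])
  have hB : ∀ v, (tadpole n i).degree v = 1 → v.val = n - 1 :=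
    fun v hv => tadpole_val_eq_of_degree_eq_one hi hn hv
  have hfB : ∀ v, (tadpole n i).degree v = 1 → f v = 0 :=
    fun v hv => by rw [← hend]; exact congrArg f (Fin.ext (hB v hv))
  have hf_nonneg : ∀ v, 0 ≤ f v := fun v => by
    rcases lt_or_ge v.val (n - 1) with h | h
    · exact (hpos v h).le
    · rw [← hend]; exact (congrArg f (Fin.ext (by simp only; omega))).ge
  have hlam : 0 < lambda1 (tadpole n i) p := by
    rw [← heig]
    refine rayleigh_pos (x := ⟨n - 2, by omega⟩) (y := ⟨n - 1, by omega⟩)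
      ((SimpleGraph.fromRel_adj _ _ _).2
        ⟨by simp only [ne_eq, Fin.mk.injEq]; omega, by simp only; omega⟩) ?_
    rw [hend]
    exact (hpos _ (by simp only; omega)).ne'
  rw [← sum_edgePairing_tadpole_indicator hi hn p f hm,
    sum_edgePairing_eq_lambda1_mul hp heig hf hfB fun v hv => if_neg (by have := hB v hv; omega)]
  refine mul_pos hlam
    (sum_pos' (fun v _ => mul_nonneg (phiP_nonneg (hf_nonneg v)) ?_) ⟨0, mem_univ _, ?_⟩)
  · split_ifs <;> norm_num
  · simp [phiP_pos_iff.2 (hpos 0 h0)]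

theorem tadpole_antitoneOn_tail (hp : 1 < p) (hi : 3 ≤ i) (hn : i < n)
    (hend : f ⟨n - 1, Nat.sub_one_lt (NeZero.ne n)⟩ = 0)
    (hpos : ∀ v : Fin n, v.val < n - 1 → 0 < f v)
    (heig : rayleigh (tadpole n i) p f = lambda1 (tadpole n i) p) :
    AntitoneOn (fun k : ℕ => f k) (Set.Icc (i - 1) (n - 1)) := by
  refine antitoneOn_of_add_one_le Set.ordConnected_Icc fun m _ hm hm1 => ?_
  simp only [Set.mem_Icc] at hm hm1
  have h := tadpole_flux_pos hp hi hn hend hpos heig (m := m) (by omega)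
  rw [if_neg (by omega), zero_add, phiP_pos_iff, sub_pos] at h
  exact h.le

theorem tadpole_junction_lt_head (hp : 1 < p) (hi : 3 ≤ i) (hn : i < n)
    (hend : f ⟨n - 1, Nat.sub_one_lt (NeZero.ne n)⟩ = 0)
    (hpos : ∀ v : Fin n, v.val < n - 1 → 0 < f v)
    (heig : rayleigh (tadpole n i) p f = lambda1 (tadpole n i) p) :
    f ↑(i - 1) < f 0 ∨ f ↑(i - 1) < f ↑(i - 2) := by
  have h := tadpole_flux_pos hp hi hn hend hpos heig (m := i - 2) (by omega)
  rw [if_pos (by omega), show i - 2 + 1 = i - 1 by omega] at h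
  by_contra! hle
  have h1 : phiP p (f 0 - f ↑(i - 1)) ≤ 0 := not_lt.1 (mt phiP_pos_iff.1 (by linarith))
  have h2 : phiP p (f ↑(i - 2) - f ↑(i - 1)) ≤ 0 := not_lt.1 (mt phiP_pos_iff.1 (by linarith))
  linarith

end Tadpole

/-- A positive first `p`-Dirichlet eigenfunction of the tadpole graph `T_{n,i}`
does not achieve its maximum on the tail.  (Vertex `t_k` is `k - 1 : Fin n`; the tail
consists of the vertices `t_j` with `i ≤ j ≤ n`, and `f(t_n) = 0`.) -/
theorem eigenfunction_max_not_in_tail (n i : ℕ) (hi : 3 ≤ i) (hn : i < n)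
    {p : ℝ} (hp : 1 < p) (f : Fin n → ℝ)
    (hend : f ⟨n - 1, by omega⟩ = 0)
    (hpos : ∀ v : Fin n, v.val < n - 1 → 0 < f v)
    (heig : rayleigh (tadpole n i) p f = lambda1 (tadpole n i) p) :
    ∀ j : Fin n, i - 1 ≤ j.val → f j < ⨆ v : Fin n, f v := by
  open Fin.NatCast in
  intro j hj
  have : NeZero n := ⟨by omega⟩
  obtain ⟨v, hv⟩ : ∃ v : Fin n, f ↑(i - 1) < f v :=
    (tadpole_junction_lt_head hp hi hn hend hpos heig).elim (⟨_, ·⟩) (⟨_, ·⟩)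
  have hj_le : f j ≤ f ↑(i - 1) := by
    simpa using tadpole_antitoneOn_tail hp hi hn hend hpos heig ⟨le_rfl, by omega⟩
      ⟨hj, by omega⟩ hj
  exact hj_le.trans_lt (hv.trans_le (le_ciSup (Set.finite_range f).bddAbove v))
end
end

section
/- For any n > i ≥ 3, the Dirichlet Cheeger constant of the tadpole graph T_{n,i} equals 1/(n-1), i.e., h_D(T_{n,i}) = 1/(n-1). -/
open scoped Classical

noncomputable section

/-!
Every set of interior vertices misses the leaf, so it has at most `|V| - 1` elements, and by
connectivity at least one edge leaves it. Hence the Cheeger ratio is at least `1 / (|V| - 1)`,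
and the set of all interior vertices attains this bound: the only edge leaving it is the one at
the leaf. For `T_{n,i}` the only leaf is `t_n`: every other vertex has degree at least two
once `i ≥ 3`.
-/

namespace SimpleGraph

variable {V : Type*} [Fintype V] [DecidableEq V] (G : SimpleGraph V)

theorem mk_mem_crossEdges_iff {U : Finset V} {a b : V} :
    s(a, b) ∈ crossEdges G U ↔ G.Adj a b ∧ (a ∈ U ∧ b ∉ U ∨ a ∉ U ∧ b ∈ U) := by
  simp [crossEdges]

theorem crossEdges_univ_erase (ℓ : V) :
    crossEdges G (Finset.univ.erase ℓ) = G.incidenceFinset ℓ := by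
  ext e
  induction e using Sym2.ind with
  | _ a b =>
    rw [mk_mem_crossEdges_iff, mem_incidenceFinset, mk'_mem_incidenceSet_iff]
    simp only [Finset.mem_erase, Finset.mem_univ, and_true, not_not]
    constructor
    · rintro ⟨hab, ⟨-, rfl⟩ | ⟨rfl, -⟩⟩ <;> simp [hab]
    · rintro ⟨hab, rfl | rfl⟩
      · exact ⟨hab, Or.inr ⟨rfl, hab.ne.symm⟩⟩
      · exact ⟨hab, Or.inl ⟨hab.ne, rfl⟩⟩

variable {G}

theorem Preconnected.crossEdges_nonempty (hG : G.Preconnected) {U : Finset V} {u v : V}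
    (hu : u ∈ U) (hv : v ∉ U) : (crossEdges G U).Nonempty := by
  obtain ⟨d, -, hd, hd'⟩ := (hG u v).some.exists_boundary_dart (U : Set V) hu hv
  exact ⟨d.edge, (mk_mem_crossEdges_iff G).2 ⟨d.adj, Or.inl ⟨hd, hd'⟩⟩⟩

theorem Preconnected.one_div_card_sub_one_le (hG : G.Preconnected) {U : Finset V} {ℓ : V}
    (hU : U.Nonempty) (hℓ : ℓ ∉ U) :
    1 / ((Fintype.card V : ℝ) - 1) ≤ (crossEdges G U).card / U.card := by
  obtain ⟨u, hu⟩ := hU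
  have hcard : (U.card : ℝ) ≤ Fintype.card V - 1 := by
    rw [← Nat.cast_pred (Fintype.card_pos_iff.2 ⟨ℓ⟩)]
    exact_mod_cast Nat.le_pred_of_lt (Finset.card_lt_univ_of_notMem hℓ)
  have hcross : (1 : ℝ) ≤ (crossEdges G U).card := by
    exact_mod_cast (hG.crossEdges_nonempty hu hℓ).card_pos
  calc 1 / ((Fintype.card V : ℝ) - 1) ≤ 1 / U.card :=
        one_div_le_one_div_of_le (by exact_mod_cast Finset.card_pos.2 ⟨u, hu⟩) hcard
    _ ≤ (crossEdges G U).card / U.card := by gcongr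

theorem Connected.dCheeger_eq_of_unique_leaf (hG : G.Connected) {ℓ : V} (hℓ : G.degree ℓ = 1)
    (hint : ∀ v ≠ ℓ, 2 ≤ G.degree v) :
    dCheeger G = 1 / ((Fintype.card V : ℝ) - 1) := by
  refine IsLeast.csInf_eq ⟨⟨Finset.univ.erase ℓ, ?_, ?_, ?_⟩, ?_⟩
  · obtain ⟨w, hw⟩ := G.degree_pos_iff_exists_adj ℓ |>.1 (by omega)
    exact ⟨w, Finset.mem_erase.2 ⟨hw.ne.symm, Finset.mem_univ w⟩⟩
  · exact fun v hv => hint v (Finset.ne_of_mem_erase hv)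
  · rw [crossEdges_univ_erase, card_incidenceFinset_eq_degree, hℓ,
      Finset.card_erase_of_mem (Finset.mem_univ ℓ), Finset.card_univ,
      Nat.cast_pred (Fintype.card_pos_iff.2 ⟨ℓ⟩)]
    norm_num
  · rintro r ⟨U, hU, hdeg, rfl⟩
    exact hG.preconnected.one_div_card_sub_one_le hU fun h => by simpa [hℓ] using hdeg ℓ h

end SimpleGraph

open SimpleGraph

theorem tadpole_adj {n i : ℕ} {a b : Fin n} :
    (tadpole n i).Adj a b ↔ a ≠ b ∧ (a.val + 1 = b.val ∨ b.val + 1 = a.val ∨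
      a.val = 0 ∧ b.val = i - 1 ∨ b.val = 0 ∧ a.val = i - 1) := by
  simp only [tadpole, fromRel_adj]
  tauto

theorem pathGraph_le_tadpole (n i : ℕ) : pathGraph n ≤ tadpole n i := fun a b hab => by
  rw [pathGraph_adj] at hab
  rw [tadpole_adj, ne_eq, Fin.ext_iff]
  omega

theorem tadpole_connected {n : ℕ} (i : ℕ) (hn : 0 < n) : (tadpole n i).Connected := by
  obtain ⟨m, rfl⟩ : ∃ m, n = m + 1 := ⟨n - 1, by omega⟩
  exact (pathGraph_connected m).mono (pathGraph_le_tadpole _ i)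

theorem tadpole_degree_eq_one {n i : ℕ} (hin : i < n) (hn : 2 ≤ n) {ℓ : Fin n}
    (hℓ : ℓ.val = n - 1) : (tadpole n i).degree ℓ = 1 := by
  rw [← card_neighborFinset_eq_degree, Finset.card_eq_one]
  refine ⟨⟨n - 2, by omega⟩, Finset.ext fun a => ?_⟩
  rw [mem_neighborFinset, tadpole_adj, Finset.mem_singleton, ne_eq, Fin.ext_iff, Fin.ext_iff]
  dsimp only
  omega

theorem two_le_tadpole_degree {n i : ℕ} (hi : 3 ≤ i) (hin : i < n) {v : Fin n}
    (hv : v.val ≠ n - 1) : 2 ≤ (tadpole n i).degree v := by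
  have := v.isLt
  rw [← card_neighborFinset_eq_degree, Nat.succ_le_iff, Finset.one_lt_card]
  -- `t_1` is adjacent to `t_2` and `t_i`, which differ as `i ≥ 3`; any other `t_k` to `t_{k±1}`.
  by_cases h0 : v.val = 0
  · refine ⟨⟨1, by omega⟩, ?_, ⟨i - 1, by omega⟩, ?_, ?_⟩ <;>
      simp only [mem_neighborFinset, tadpole_adj, ne_eq, Fin.ext_iff, and_true] <;>
      omega
  · refine ⟨⟨v.val - 1, by omega⟩, ?_, ⟨v.val + 1, by omega⟩, ?_, ?_⟩ <;>
      simp only [mem_neighborFinset, tadpole_adj, ne_eq, Fin.ext_iff, and_true, true_or] <;>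
      omega

/-- The Dirichlet Cheeger constant of the tadpole graph `T_{n,i}` equals `1/(n-1)`. -/
theorem cheeger_tadpole (n i : ℕ) (hi : 3 ≤ i) (hn : i < n) :
    dCheeger (tadpole n i) = 1 / ((n : ℝ) - 1) := by
  have h := (tadpole_connected i (by omega)).dCheeger_eq_of_unique_leaf
    (tadpole_degree_eq_one hn (by omega) (ℓ := ⟨n - 1, by omega⟩) rfl)
    fun v hv => two_le_tadpole_degree hi hn fun h => hv (Fin.ext h)
  rwa [Fintype.card_fin] at h
end
end
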